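/- arXiv:1902.01658 — 2 statements merged into one kernel-verified Lean document; each statement's English description precedes it below -/
import Mathlib

section
/- Consider the 2×3 matrix M(s) over ℂ[x,y,z,w] obtained from the net of quadrics with b₂ = −(3/2)s², b₃ = s³, b₄ = 3s: M = [[3s²y − s³w − 3sz, z, y], [−z, y, w]]. The scheme defined by the 2×2 minors of the matrix [[−2b₂y − b₃w − b₄z, z, y], [−z, y, w]] with these parameter values has a reduced support equal to a line in ℙ³ (the common zero locus of two independent linear forms among the minors' radical). -/
open MvPolynomial

/-- The ideal of 2×2 minors of the matrix `[[−2b₂y − b₃w − b₄z, z, y], [−z, y, w]]`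
of linear forms in the coordinates `x, y, z, w` of `ℙ³` (with `y = X 1`, `z = X 2`,
`w = X 3`), cutting out a cubic curve. -/
noncomputable def minorsIdeal (b₂ b₃ b₄ : ℂ) : Ideal (MvPolynomial (Fin 4) ℂ) :=
  let y : MvPolynomial (Fin 4) ℂ := X 1
  let z : MvPolynomial (Fin 4) ℂ := X 2
  let w : MvPolynomial (Fin 4) ℂ := X 3
  let A : MvPolynomial (Fin 4) ℂ := C (-2 * b₂) * y + C (-b₃) * w + C (-b₄) * z
  Ideal.span {A * y + z ^ 2, A * w + y * z, z * w - y ^ 2}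

/-- Substituting `X i ↦ f i` changes a polynomial by an element of any ideal containing
all the `X i - f i`. -/
lemma sub_aeval_mem (f : Fin 4 → MvPolynomial (Fin 4) ℂ) (J : Ideal (MvPolynomial (Fin 4) ℂ))
    (h : ∀ i, X i - f i ∈ J) (p : MvPolynomial (Fin 4) ℂ) : p - aeval f p ∈ J := by
  induction p using MvPolynomial.induction_on with
  | C a => simp
  | add p q hp hq =>
      have : p + q - aeval f (p + q) = (p - aeval f p) + (q - aeval f q) := by
        rw [map_add]; ring
      rw [this]; exact add_mem hp hq
  | mul_X p i hp =>
      have : p * X i - aeval f (p * X i) =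
          (p - aeval f p) * X i + aeval f p * (X i - f i) := by
        rw [map_mul, aeval_X]; ring
      rw [this]
      exact add_mem (Ideal.mul_mem_right _ _ hp) (Ideal.mul_mem_left _ _ (h i))

/-- For parameters `(b₂, b₃, b₄) = (−(3/2)s², s³, 3s)`, the cubic curve defined by
the 2×2 minors is supported on a line: the radical of the ideal of minors is
generated by two linearly independent linear forms. -/
theorem support_is_line_of_parameters (s : ℂ) :
    ∃ l₁ l₂ : MvPolynomial (Fin 4) ℂ,
      l₁.IsHomogeneous 1 ∧ l₂.IsHomogeneous 1 ∧ LinearIndependent ℂ ![l₁, l₂] ∧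
      (minorsIdeal (-(3 / 2) * s ^ 2) (s ^ 3) (3 * s)).radical = Ideal.span {l₁, l₂} := by
  set c : MvPolynomial (Fin 4) ℂ := C s with hc
  set l₁ : MvPolynomial (Fin 4) ℂ := X 1 - c * X 3 with hl₁
  set l₂ : MvPolynomial (Fin 4) ℂ := X 2 - c ^ 2 * X 3 with hl₂
  set J : Ideal (MvPolynomial (Fin 4) ℂ) := Ideal.span {l₁, l₂} with hJ
  have hl₁J : l₁ ∈ J := Ideal.subset_span (by simp)
  have hl₂J : l₂ ∈ J := Ideal.subset_span (by simp)
  -- rewriting of the constants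
  have e1 : (C (-2 * (-(3 / 2) * s ^ 2)) : MvPolynomial (Fin 4) ℂ) = 3 * c ^ 2 := by
    rw [show (-2 * (-(3 / 2) * s ^ 2) : ℂ) = 3 * s ^ 2 by ring, C_mul, C_pow, map_ofNat]
  have e2 : (C (-(s ^ 3)) : MvPolynomial (Fin 4) ℂ) = -c ^ 3 := by
    rw [map_neg, C_pow]
  have e3 : (C (-(3 * s)) : MvPolynomial (Fin 4) ℂ) = -(3 * c) := by
    rw [map_neg, C_mul, map_ofNat]
  -- the three generators of the ideal of minors
  set A : MvPolynomial (Fin 4) ℂ :=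
    C (-2 * (-(3 / 2) * s ^ 2)) * X 1 + C (-(s ^ 3)) * X 3 + C (-(3 * s)) * X 2 with hA
  set g₁ : MvPolynomial (Fin 4) ℂ := A * X 1 + X 2 ^ 2 with hg₁
  set g₂ : MvPolynomial (Fin 4) ℂ := A * X 3 + X 1 * X 2 with hg₂
  set g₃ : MvPolynomial (Fin 4) ℂ := X 2 * X 3 - X 1 ^ 2 with hg₃
  have hI : minorsIdeal (-(3 / 2) * s ^ 2) (s ^ 3) (3 * s) = Ideal.span {g₁, g₂, g₃} := rfl
  have hg₁I : g₁ ∈ Ideal.span {g₁, g₂, g₃} := Ideal.subset_span (by simp)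
  have hg₂I : g₂ ∈ Ideal.span {g₁, g₂, g₃} := Ideal.subset_span (by simp)
  have hg₃I : g₃ ∈ Ideal.span {g₁, g₂, g₃} := Ideal.subset_span (by simp)
  -- J is the kernel of the substitution onto the line, hence prime
  have hker : J = RingHom.ker (aeval ![X 0, c * X 3, c ^ 2 * X 3,
      (X 3 : MvPolynomial (Fin 4) ℂ)] : MvPolynomial (Fin 4) ℂ →ₐ[ℂ] _).toRingHom := by
    apply le_antisymm
    · rw [hJ, Ideal.span_le]
      rintro x (rfl | rfl) <;>
      · rw [SetLike.mem_coe, RingHom.mem_ker]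
        simp [hl₁, hl₂, hc]
    · intro p hp
      have h0 : ∀ i, X i - (![X 0, c * X 3, c ^ 2 * X 3, (X 3 : MvPolynomial (Fin 4) ℂ)]) i ∈ J := by
        intro i
        fin_cases i
        · simp
        · simpa using hl₁J
        · simpa using hl₂J
        · simp
      have := sub_aeval_mem _ J h0 p
      rw [RingHom.mem_ker] at hp
      rwa [show (aeval ![X 0, c * X 3, c ^ 2 * X 3, (X 3 : MvPolynomial (Fin 4) ℂ)] p) = 0 from hp,
        sub_zero] at this
  have hJprime : J.IsPrime := by
    rw [hker]; exact RingHom.ker_isPrime _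
  -- I ⊆ J
  have hIJ : Ideal.span {g₁, g₂, g₃} ≤ J := by
    rw [Ideal.span_le]
    rintro x (rfl | rfl | rfl)
    · have : g₁ = (3 * c ^ 2 * l₁ + 2 * c ^ 3 * X 3 - 3 * c * l₂) * l₁ + (l₂ - c ^ 2 * X 3) * l₂ := by
        rw [hg₁, hA, e1, e2, e3, hl₁, hl₂]; ring
      rw [this]
      exact add_mem (Ideal.mul_mem_left _ _ hl₁J) (Ideal.mul_mem_left _ _ hl₂J)
    · have : g₂ = (l₂ + 4 * c ^ 2 * X 3) * l₁ + (-(2 * c * X 3)) * l₂ := by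
        rw [hg₂, hA, e1, e2, e3, hl₁, hl₂]; ring
      rw [this]
      exact add_mem (Ideal.mul_mem_left _ _ hl₁J) (Ideal.mul_mem_left _ _ hl₂J)
    · have : g₃ = (-l₁ - 2 * c * X 3) * l₁ + X 3 * l₂ := by
        rw [hg₃, hl₁, hl₂]; ring
      rw [this]
      exact add_mem (Ideal.mul_mem_left _ _ hl₁J) (Ideal.mul_mem_left _ _ hl₂J)
  -- J ⊆ radical I
  have hJI : J ≤ (Ideal.span {g₁, g₂, g₃}).radical := by
    rw [hJ, Ideal.span_le]
    rintro x (rfl | rfl)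
    · refine ⟨3, ?_⟩
      have : l₁ ^ 3 = X 3 * g₂ + (2 * c * X 3 - l₁) * g₃ := by
        rw [hg₂, hg₃, hA, e1, e2, e3, hl₁]; ring
      rw [this]
      exact add_mem (Ideal.mul_mem_left _ _ hg₂I) (Ideal.mul_mem_left _ _ hg₃I)
    · refine ⟨3, ?_⟩
      have : l₂ ^ 3 = l₂ * g₁ + (3 * c * l₂ + 4 * c ^ 2 * l₁ + 8 * c ^ 3 * X 3) * g₂ +
          (7 * c ^ 2 * l₂ + 16 * c ^ 4 * X 3) * g₃ := by
        rw [hg₁, hg₂, hg₃, hA, e1, e2, e3, hl₁, hl₂]; ring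
      rw [this]
      exact add_mem (add_mem (Ideal.mul_mem_left _ _ hg₁I) (Ideal.mul_mem_left _ _ hg₂I))
        (Ideal.mul_mem_left _ _ hg₃I)
  refine ⟨l₁, l₂, ?_, ?_, ?_, ?_⟩
  · rw [hl₁, hc]
    exact (isHomogeneous_X _ _).sub (isHomogeneous_C_mul_X s 3)
  · rw [hl₂, hc, ← C_pow]
    exact (isHomogeneous_X _ _).sub (isHomogeneous_C_mul_X (s ^ 2) 3)
  · rw [LinearIndependent.pair_iff]
    intro a b hab
    have h1 := congrArg (coeff (Finsupp.single 1 1)) hab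
    have h2 := congrArg (coeff (Finsupp.single 2 1)) hab
    simp only [hl₁, hl₂, hc, ← C_pow, smul_eq_C_mul, coeff_zero, coeff_add, coeff_C_mul, mul_sub,
      coeff_sub] at h1 h2
    constructor
    · simpa [coeff_X', Finsupp.single_eq_single_iff] using h1
    · simpa [coeff_X', Finsupp.single_eq_single_iff] using h2
  · rw [hI]
    exact le_antisymm (hJprime.isRadical.radical_le_iff.2 hIJ) hJI
end

section
/- Conversely, for the matrix [[−2b₂y − b₃w − b₄z, z, y], [−z, y, w]] of linear forms in ℂ[x,y,z,w], if the radical of the ideal of 2×2 minors is generated by linear forms (i.e., the support of the cubic curve is a line in ℙ³), then there exists s ∈ ℂ with b₂ = −(3/2)s², b₃ = s³, b₄ = 3s. -/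
open MvPolynomial

lemma finsupp_degree_one {σ : Type*} [DecidableEq σ] (d : σ →₀ ℕ) (hd : d.degree = 1) :
    ∃ i, d = Finsupp.single i 1 := by
  have hc : (Finsupp.toMultiset d).card = 1 := by
    rw [Finsupp.card_toMultiset]
    simpa [Finsupp.degree_apply, Finsupp.sum] using hd
  obtain ⟨i, hi⟩ := Multiset.card_eq_one.mp hc
  refine ⟨i, ?_⟩
  have h1 : Finsupp.toMultiset (Finsupp.single i 1) = {i} := by
    simp [Finsupp.toMultiset_single]
  have h2 := Finsupp.toMultiset_toFinsupp d
  rw [hi] at h2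
  rw [← h2, ← h1, Finsupp.toMultiset_toFinsupp]

lemma hom1_decomp (l : MvPolynomial (Fin 4) ℂ) (hl : l.IsHomogeneous 1) :
    l = ∑ i : Fin 4, C (coeff (Finsupp.single i 1) l) * X i := by
  apply MvPolynomial.ext
  intro d
  rw [MvPolynomial.coeff_sum]
  by_cases hd : d.degree = 1
  · obtain ⟨i, rfl⟩ := finsupp_degree_one d hd
    rw [Finset.sum_eq_single i]
    · simp [coeff_C_mul, coeff_X']
    · intro j _ hj
      simp only [coeff_C_mul, coeff_X']
      rw [if_neg, mul_zero]
      intro hcon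
      exact hj (by simpa using (Finsupp.single_left_inj one_ne_zero).mp hcon)
    · simp
  · rw [hl.coeff_eq_zero hd]
    symm
    apply Finset.sum_eq_zero
    intro j _
    simp only [coeff_C_mul, coeff_X']
    rw [if_neg, mul_zero]
    intro hcon
    apply hd
    rw [← hcon]
    simp [Finsupp.degree_apply, Finsupp.support_single_ne_zero _ one_ne_zero]

lemma eval_vanish (b₂ b₃ b₄ t : ℂ) (ht : t^3 - b₄*t^2 - 2*b₂*t - b₃ = 0)
    (f : MvPolynomial (Fin 4) ℂ)
    (hf : f ∈ minorsIdeal b₂ b₃ b₄) : eval ![0, t, t^2, 1] f = 0 := by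
  have hker : minorsIdeal b₂ b₃ b₄ ≤ RingHom.ker (eval ![0, t, t^2, (1:ℂ)]) := by
    rw [minorsIdeal, Ideal.span_le]
    rintro g hg
    simp only [Set.mem_insert_iff, Set.mem_singleton_iff] at hg
    have hsimp : ∀ g : MvPolynomial (Fin 4) ℂ,
        eval ![0, t, t^2, (1:ℂ)] g = 0 → g ∈ (RingHom.ker (eval ![0, t, t^2, (1:ℂ)]) : Ideal _) :=
      fun g hgg => by rwa [RingHom.mem_ker]
    rcases hg with rfl | rfl | rfl <;> apply SetLike.mem_coe.mpr <;> apply hsimp <;>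
        simp only [map_add, map_sub, map_mul, map_pow, eval_C, eval_X,
          Matrix.cons_val_zero, Matrix.cons_val_one, Matrix.head_cons, Matrix.cons_val_two,
          Matrix.cons_val_three, Matrix.tail_cons]
    · linear_combination (t) * ht
    · linear_combination ht
    · ring
  exact hker hf

lemma radical_vanish (b₂ b₃ b₄ t : ℂ) (ht : t^3 - b₄*t^2 - 2*b₂*t - b₃ = 0)
    (l : MvPolynomial (Fin 4) ℂ) (hl : l ∈ (minorsIdeal b₂ b₃ b₄).radical) :
    eval ![0, t, t^2, 1] l = 0 := by
  obtain ⟨n, hn⟩ := hl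
  have := eval_vanish b₂ b₃ b₄ t ht _ hn
  rw [map_pow] at this
  exact (pow_eq_zero_iff'.mp this).1

/-- Conversely, if the radical of the ideal of 2×2 minors is generated by linear
forms (i.e. the cubic curve is supported on a line in `ℙ³`), then the parameters
lie on the rational curve `s ↦ (−(3/2)s², s³, 3s)`. -/
theorem parameters_of_support_is_line (b₂ b₃ b₄ : ℂ)
    (h : ∃ l₁ l₂ : MvPolynomial (Fin 4) ℂ,
      l₁.IsHomogeneous 1 ∧ l₂.IsHomogeneous 1 ∧
      (minorsIdeal b₂ b₃ b₄).radical = Ideal.span {l₁, l₂}) :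
    ∃ s : ℂ, b₂ = -(3 / 2) * s ^ 2 ∧ b₃ = s ^ 3 ∧ b₄ = 3 * s := by
  classical
  obtain ⟨l₁, l₂, h₁, h₂, hrad⟩ := h
  -- key claim: any two roots of t^3 - b₄ t^2 - 2 b₂ t - b₃ are equal
  have key : ∀ a c : ℂ, a^3 - b₄*a^2 - 2*b₂*a - b₃ = 0 → c^3 - b₄*c^2 - 2*b₂*c - b₃ = 0 →
      a = c := by
    intro a c ha hc
    -- coefficients of l₁, l₂
    set u : Fin 4 → ℂ := fun i => coeff (Finsupp.single i 1) l₁ with hu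
    set v : Fin 4 → ℂ := fun i => coeff (Finsupp.single i 1) l₂ with hv
    have hl₁ : l₁ = ∑ i : Fin 4, C (u i) * X i := hom1_decomp l₁ h₁
    have hl₂ : l₂ = ∑ i : Fin 4, C (v i) * X i := hom1_decomp l₂ h₂
    have hmem₁ : l₁ ∈ (minorsIdeal b₂ b₃ b₄).radical := by
      rw [hrad]; exact Ideal.subset_span (by simp)
    have hmem₂ : l₂ ∈ (minorsIdeal b₂ b₃ b₄).radical := by
      rw [hrad]; exact Ideal.subset_span (by simp)
    have evl : ∀ (l : MvPolynomial (Fin 4) ℂ) (cf : Fin 4 → ℂ),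
        l = ∑ i : Fin 4, C (cf i) * X i → ∀ x : Fin 4 → ℂ,
        eval x l = cf 0 * x 0 + cf 1 * x 1 + cf 2 * x 2 + cf 3 * x 3 := by
      intro l cf hlc x
      rw [hlc]
      simp [Fin.sum_univ_four]
    have ea1 : u 1 * a + u 2 * a^2 + u 3 = 0 := by
      have := radical_vanish b₂ b₃ b₄ a ha l₁ hmem₁
      rw [evl l₁ u hl₁] at this
      simpa using this
    have ec1 : u 1 * c + u 2 * c^2 + u 3 = 0 := by
      have := radical_vanish b₂ b₃ b₄ c hc l₁ hmem₁
      rw [evl l₁ u hl₁] at this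
      simpa using this
    have ea2 : v 1 * a + v 2 * a^2 + v 3 = 0 := by
      have := radical_vanish b₂ b₃ b₄ a ha l₂ hmem₂
      rw [evl l₂ v hl₂] at this
      simpa using this
    have ec2 : v 1 * c + v 2 * c^2 + v 3 = 0 := by
      have := radical_vanish b₂ b₃ b₄ c hc l₂ hmem₂
      rw [evl l₂ v hl₂] at this
      simpa using this
    -- zw - y^2 lies in span {l₁, l₂}
    have hq : (X 2 * X 3 - X 1 ^ 2 : MvPolynomial (Fin 4) ℂ) ∈ Ideal.span {l₁, l₂} := by
      rw [← hrad]
      apply Ideal.le_radical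
      exact Ideal.subset_span (by simp [minorsIdeal])
    rw [Ideal.mem_span_pair] at hq
    obtain ⟨f, g, hfg⟩ := hq
    -- evaluate at the midpoint ![0, a+c, a^2+c^2, 2]
    set p : Fin 4 → ℂ := ![0, a + c, a^2 + c^2, 2] with hp
    have heval := congrArg (eval p) hfg
    rw [map_add, map_mul, map_mul, map_sub, map_mul, map_pow, eval_X, eval_X, eval_X] at heval
    rw [evl l₁ u hl₁ p, evl l₂ v hl₂ p] at heval
    have hp1 : p 1 = a + c := rfl
    have hp2 : p 2 = a^2 + c^2 := rfl
    have hp3 : p 3 = 2 := rfl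
    have hp0 : p 0 = 0 := rfl
    rw [hp0, hp1, hp2, hp3] at heval
    have hzero : ((a - c)^2 : ℂ) = 0 := by
      have h1 : u 0 * 0 + u 1 * (a + c) + u 2 * (a^2 + c^2) + u 3 * 2 = 0 := by
        linear_combination ea1 + ec1
      have h2 : v 0 * 0 + v 1 * (a + c) + v 2 * (a^2 + c^2) + v 3 * 2 = 0 := by
        linear_combination ea2 + ec2
      rw [h1, h2, mul_zero, mul_zero, add_zero] at heval
      linear_combination -heval
    have h3 := pow_eq_zero_iff (n := 2) (by norm_num) |>.mp hzero
    exact sub_eq_zero.mp h3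
  -- now use the cubic q = X^3 - b₄ X^2 - 2 b₂ X - b₃
  set q : Polynomial ℂ := Polynomial.X ^ 3 - Polynomial.C b₄ * Polynomial.X ^ 2 -
    Polynomial.C (2 * b₂) * Polynomial.X - Polynomial.C b₃ with hqdef
  have hqroot : ∀ t : ℂ, q.IsRoot t → t^3 - b₄*t^2 - 2*b₂*t - b₃ = 0 := by
    intro t ht
    rw [Polynomial.IsRoot, hqdef] at ht
    simp only [Polynomial.eval_sub, Polynomial.eval_pow, Polynomial.eval_mul, Polynomial.eval_X,
      Polynomial.eval_C] at ht
    linear_combination ht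
  have hmonic : q.Monic := by
    rw [hqdef]
    monicity!
  have hdeg : q.natDegree = 3 := by
    rw [hqdef]
    compute_degree!
  have hdeg' : q.degree = 3 := by
    rw [Polynomial.degree_eq_natDegree hmonic.ne_zero, hdeg]
    rfl
  have hsplits : Polynomial.Splits q := IsAlgClosed.splits q
  have hcard : Multiset.card q.roots = 3 := by
    rw [Polynomial.splits_iff_card_roots.mp hsplits, hdeg]
  obtain ⟨s, hs⟩ := Complex.exists_root (by rw [hdeg']; norm_num : 0 < q.degree)
  have hseq : s^3 - b₄*s^2 - 2*b₂*s - b₃ = 0 := hqroot s hs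
  have hroots : q.roots = Multiset.replicate 3 s := by
    rw [Multiset.eq_replicate]
    refine ⟨hcard, fun b hb => ?_⟩
    exact key b s (hqroot b (Polynomial.isRoot_of_mem_roots hb)) hseq
  have hfact : q = (Polynomial.X - Polynomial.C s) ^ 3 := by
    have hprod := hsplits.eq_prod_roots_of_monic hmonic
    rw [hroots, Multiset.map_replicate, Multiset.prod_replicate] at hprod
    exact hprod
  have E : ∀ t : ℂ, t^3 - b₄*t^2 - 2*b₂*t - b₃ = (t - s)^3 := by
    intro t
    have := congrArg (Polynomial.eval t) hfact
    rw [hqdef] at this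
    simp only [Polynomial.eval_sub, Polynomial.eval_pow, Polynomial.eval_mul, Polynomial.eval_X,
      Polynomial.eval_C] at this
    linear_combination this
  have e0 := E s
  have e1 := E (s + 1)
  have e2 := E (s - 1)
  have hb₄ : b₄ = 3 * s := by
    linear_combination (-(1:ℂ)/2) * e1 + (-(1:ℂ)/2) * e2 + e0
  have hb₂ : b₂ = -(3 / 2) * s ^ 2 := by
    linear_combination (-(1:ℂ)/4 + s/2) * e1 + ((1:ℂ)/4 + s/2) * e2 + (-s) * e0
  have hb₃ : b₃ = s ^ 3 := by
    linear_combination (-1 : ℂ) * e0 - s^2 * hb₄ - 2*s*hb₂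
  exact ⟨s, hb₂, hb₃, hb₄⟩
end
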